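/- Let I ⊆ ℝ be an interval, let φ : ℝ → ℝ be twice differentiable on I with φ''(y) ≤ M for all y ∈ I, and let Y be a real-valued random variable on a probability space (Ω, 𝓕, P) taking values in I almost surely, with Y square-integrable and φ(Y) integrable and 𝔼[Y] ∈ I. Then 𝔼[φ(Y)] − φ(𝔼[Y]) ≤ (M/2) · Var(Y), where Var(Y) = 𝔼[(Y − 𝔼[Y])²]. -/

import Mathlib

/-!
Since `φ'' ≤ M` on `I`, the function `t ↦ φ t - M / 2 * t ^ 2` is concave on `I`, so it lies below
its tangent line at `m = 𝔼[Y]`. This gives the pointwise quadratic upper bound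
`φ y ≤ φ m + φ' m * (y - m) + M / 2 * (y - m) ^ 2` on `I`; taking expectations at `y = Y` kills
the linear term and leaves `φ m + M / 2 * Var(Y)`.
-/

open MeasureTheory

lemma ConcaveOn.le_add_mul_sub_of_hasDerivAt {S : Set ℝ} {f : ℝ → ℝ} {f' x y : ℝ}
    (hf : ConcaveOn ℝ S f) (hx : x ∈ S) (hy : y ∈ S) (hf' : HasDerivAt f f' x) :
    f y ≤ f x + f' * (y - x) := by
  rcases lt_trichotomy x y with hxy | rfl | hyx
  · have hslope := hf.slope_le_of_hasDerivAt hx hy hxy hf'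
    rw [slope_def_field, div_le_iff₀ (sub_pos.2 hxy)] at hslope
    linarith
  · simp
  · have hslope := hf.le_slope_of_hasDerivAt hy hx hyx hf'
    rw [slope_def_field, le_div_iff₀ (sub_pos.2 hyx)] at hslope
    linarith

lemma le_add_mul_sub_add_sq_of_hasDerivAt_of_le {I : Set ℝ} (hI : Convex ℝ I)
    {φ φ' φ'' : ℝ → ℝ} {M : ℝ}
    (hd1 : ∀ y ∈ I, HasDerivAt φ (φ' y) y) (hd2 : ∀ y ∈ I, HasDerivAt φ' (φ'' y) y)
    (hM : ∀ y ∈ I, φ'' y ≤ M) {m y : ℝ} (hm : m ∈ I) (hy : y ∈ I) :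
    φ y ≤ φ m + φ' m * (y - m) + M / 2 * (y - m) ^ 2 := by
  have hderiv : ∀ t ∈ I, HasDerivAt (fun t => φ t - M / 2 * t ^ 2) (φ' t - M * t) t := by
    intro t ht
    exact ((hd1 t ht).sub ((hasDerivAt_pow 2 t).const_mul (M / 2))).congr_deriv (by ring)
  have hderiv2 : ∀ t ∈ I, HasDerivAt (fun t => φ' t - M * t) (φ'' t - M) t := by
    intro t ht
    exact ((hd2 t ht).sub ((hasDerivAt_id' t).const_mul M)).congr_deriv (by ring)
  have hconcave : ConcaveOn ℝ I (fun t => φ t - M / 2 * t ^ 2) :=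
    concaveOn_of_hasDerivWithinAt2_nonpos hI
      (fun t ht => (hderiv t ht).continuousAt.continuousWithinAt)
      (fun t ht => (hderiv t (interior_subset ht)).hasDerivWithinAt)
      (fun t ht => (hderiv2 t (interior_subset ht)).hasDerivWithinAt)
      (fun t ht => sub_nonpos.2 (hM t (interior_subset ht)))
  have htangent := hconcave.le_add_mul_sub_of_hasDerivAt hm hy (hderiv m hm)
  linear_combination htangent

lemma integral_add_mul_centered_add_mul_sq {Ω : Type*} [MeasurableSpace Ω] {μ : Measure Ω}
    [IsProbabilityMeasure μ] {Y : Ω → ℝ} (hY : MemLp Y 2 μ) (a b c : ℝ) :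
    ∫ ω, (a + b * (Y ω - ∫ ω', Y ω' ∂μ) + c * (Y ω - ∫ ω', Y ω' ∂μ) ^ 2) ∂μ
      = a + c * ∫ ω, (Y ω - ∫ ω', Y ω' ∂μ) ^ 2 ∂μ := by
  set m := ∫ ω, Y ω ∂μ
  have hcentered : Integrable (fun ω => Y ω - m) μ :=
    (hY.integrable one_le_two).sub (integrable_const m)
  have hsq : Integrable (fun ω => (Y ω - m) ^ 2) μ := (hY.sub (memLp_const m)).integrable_sq
  have hmean_zero : ∫ ω, (Y ω - m) ∂μ = 0 := by
    rw [integral_sub (hY.integrable one_le_two) (integrable_const m)]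
    simp [m]
  have haffine : Integrable (fun ω => a + b * (Y ω - m)) μ :=
    (integrable_const a).add (hcentered.const_mul b)
  rw [integral_add haffine (hsq.const_mul c),
    integral_add (integrable_const a) (hcentered.const_mul b), integral_const_mul,
    integral_const_mul, hmean_zero]
  simp

/-- **Jensen-gap bound.**
Let `I ⊆ ℝ` be an interval (a convex set of reals), `φ : ℝ → ℝ` twice
differentiable on `I` (with first derivative `φ'` and second derivative `φ''`
on `I`) satisfying `φ''(y) ≤ M` on `I`, and let `Y` be a square-integrable
random variable taking values in `I` a.s., with `φ(Y)` integrable and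
`𝔼[Y] ∈ I`. Then `𝔼[φ(Y)] − φ(𝔼[Y]) ≤ (M/2) · Var(Y)`. -/
theorem jensen_gap_bound {Ω : Type*} [MeasurableSpace Ω]
    (μ : Measure Ω) [IsProbabilityMeasure μ]
    (I : Set ℝ) (hI : Convex ℝ I)
    (φ φ' φ'' : ℝ → ℝ) (M : ℝ)
    (hd1 : ∀ y ∈ I, HasDerivAt φ (φ' y) y)
    (hd2 : ∀ y ∈ I, HasDerivAt φ' (φ'' y) y)
    (hM : ∀ y ∈ I, φ'' y ≤ M)
    (Y : Ω → ℝ) (hY2 : MemLp Y 2 μ)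
    (hYI : ∀ᵐ ω ∂μ, Y ω ∈ I)
    (hφY : Integrable (fun ω => φ (Y ω)) μ)
    (hmean : (∫ ω, Y ω ∂μ) ∈ I) :
    (∫ ω, φ (Y ω) ∂μ) - φ (∫ ω, Y ω ∂μ)
      ≤ (M / 2) * ∫ ω, (Y ω - ∫ ω', Y ω' ∂μ) ^ 2 ∂μ := by
  set m := ∫ ω, Y ω ∂μ
  have hbound_integrable :
      Integrable (fun ω => φ m + φ' m * (Y ω - m) + M / 2 * (Y ω - m) ^ 2) μ :=
    ((integrable_const _).add
      (((hY2.integrable one_le_two).sub (integrable_const m)).const_mul _)).add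
      ((hY2.sub (memLp_const m)).integrable_sq.const_mul _)
  have hbound : ∫ ω, φ (Y ω) ∂μ ≤ φ m + M / 2 * ∫ ω, (Y ω - m) ^ 2 ∂μ := by
    rw [← integral_add_mul_centered_add_mul_sq hY2 (φ m) (φ' m) (M / 2)]
    refine integral_mono_ae hφY hbound_integrable ?_
    filter_upwards [hYI] with ω hω
    exact le_add_mul_sub_add_sq_of_hasDerivAt_of_le hI hd1 hd2 hM hmean hω
  linarith
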